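/- A closable Hermitean quadratic form Q on a dense domain D in a direct integral Hilbert space H is orthogonally additive if and only if it is countably orthogonally additive. -/

import Mathlib

open MeasureTheory Filter Topology

/-!
For fixed `Φ`, countable additivity of `P` makes `Δ ↦ P Δ Φ` a vector measure. If `Δ ↦ Q (P Δ Φ)`
is countably additive it is a signed measure, hence bounded by its total variation. Conversely,
if it is finitely additive and bounded, its values on a disjoint family are absolutely summable.
For the tails `Tₙ = Δ \ (Δ₀ ∪ ⋯ ∪ Δₙ₋₁)` we have `P Tₙ Φ → 0`, and `Q (P Tₘ Φ - P Tₙ Φ)` is the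
difference of two terms of a convergent sequence: `Q (P Tₘ Φ) - Q (P Tₙ Φ)` for `m ≤ n`, and the
same for `-Φ` when `n ≤ m` (`Q` need not be even). Closability then forces `Q (P Tₙ Φ) → 0`,
which is exactly the remainder of the series.
-/

open Function

section SetFunction

variable {α E : Type*} [MeasurableSpace α]

def IsFinitelyAdditive [AddCommGroup E] (m : Set α → E) : Prop :=
  ∀ ⦃s t : Set α⦄, MeasurableSet s → MeasurableSet t → Disjoint s t → m (s ∪ t) = m s + m t

def IsCountablyAdditive [AddCommGroup E] [TopologicalSpace E] (m : Set α → E) : Prop :=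
  ∀ ⦃Δ : ℕ → Set α⦄, (∀ i, MeasurableSet (Δ i)) → Pairwise (Disjoint on Δ) →
    HasSum (fun i => m (Δ i)) (m (⋃ i, Δ i))

def IsClosableOn [AddCommGroup E] [TopologicalSpace E] (Q : E → ℝ) (D : Set E) : Prop :=
  ∀ x : ℕ → E, (∀ n, x n ∈ D) → Tendsto x atTop (𝓝 0) →
    Tendsto (fun p : ℕ × ℕ => Q (x p.1 - x p.2)) atTop (𝓝 0) →
    Tendsto (fun n => Q (x n)) atTop (𝓝 0)

namespace IsFinitelyAdditive

section AddCommGroup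

variable [AddCommGroup E] {m : Set α → E}

theorem apply_empty (hm : IsFinitelyAdditive m) : m ∅ = 0 := by
  simpa using hm MeasurableSet.empty MeasurableSet.empty (Set.disjoint_empty ∅)

theorem neg (hm : IsFinitelyAdditive m) : IsFinitelyAdditive fun s => -m s :=
  fun s t hs ht hst => show -m (s ∪ t) = -m s + -m t by rw [hm hs ht hst, neg_add]

theorem apply_sdiff (hm : IsFinitelyAdditive m) {s t : Set α} (hs : MeasurableSet s)
    (ht : MeasurableSet t) (hts : t ⊆ s) : m (s \ t) = m s - m t := by
  rw [eq_sub_iff_add_eq, ← hm (hs.diff ht) ht Set.disjoint_sdiff_left,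
    Set.sdiff_union_of_subset hts]

theorem apply_biUnion_finset (hm : IsFinitelyAdditive m) {ι : Type*} (F : Finset ι)
    {Δ : ι → Set α} (hΔ : ∀ i, MeasurableSet (Δ i)) (hd : Pairwise (Disjoint on Δ)) :
    m (⋃ i ∈ F, Δ i) = ∑ i ∈ F, m (Δ i) := by
  classical
  induction F using Finset.induction_on with
  | empty => simpa using hm.apply_empty
  | insert j F hj ih =>
    rw [Finset.set_biUnion_insert, Finset.sum_insert hj, ← ih]
    refine hm (hΔ j) (F.measurableSet_biUnion fun i _ => hΔ i) ?_
    exact Set.disjoint_iUnion₂_right.2 fun i hi => hd (ne_of_mem_of_not_mem hi hj).symm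

theorem apply_sdiff_biUnion_range (hm : IsFinitelyAdditive m) {Δ : ℕ → Set α}
    (hΔ : ∀ i, MeasurableSet (Δ i)) (hd : Pairwise (Disjoint on Δ)) (n : ℕ) :
    m ((⋃ i, Δ i) \ ⋃ i ∈ Finset.range n, Δ i) =
      m (⋃ i, Δ i) - ∑ i ∈ Finset.range n, m (Δ i) := by
  rw [hm.apply_sdiff (.iUnion hΔ) ((Finset.range n).measurableSet_biUnion fun i _ => hΔ i)
    (Set.iUnion₂_subset fun i _ => Set.subset_iUnion Δ i), hm.apply_biUnion_finset _ hΔ hd]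

end AddCommGroup

variable {m : Set α → ℝ}

theorem summable (hm : IsFinitelyAdditive m) {M : ℝ} (hM : ∀ s, MeasurableSet s → |m s| ≤ M)
    {Δ : ℕ → Set α} (hΔ : ∀ i, MeasurableSet (Δ i)) (hd : Pairwise (Disjoint on Δ)) :
    Summable fun i => m (Δ i) := by
  classical
  refine Summable.of_abs (summable_of_sum_le (c := M + M) (fun i => abs_nonneg _) fun F => ?_)
  have hunion : ∀ p : ℕ → Prop, [DecidablePred p] →
      m (⋃ i ∈ F.filter p, Δ i) = ∑ i ∈ F.filter p, m (Δ i) :=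
    fun p _ => hm.apply_biUnion_finset _ hΔ hd
  have hmeas : ∀ p : ℕ → Prop, [DecidablePred p] → MeasurableSet (⋃ i ∈ F.filter p, Δ i) :=
    fun p _ => (F.filter p).measurableSet_biUnion fun i _ => hΔ i
  calc ∑ i ∈ F, |m (Δ i)|
      = ∑ i ∈ F with 0 ≤ m (Δ i), m (Δ i) - ∑ i ∈ F with ¬0 ≤ m (Δ i), m (Δ i) := by
        rw [← F.sum_filter_add_sum_filter_not (fun i => 0 ≤ m (Δ i)), sub_eq_add_neg,
          ← Finset.sum_neg_distrib]
        congr 1 <;> refine Finset.sum_congr rfl fun i hi => ?_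
        · exact abs_of_nonneg (Finset.mem_filter.1 hi).2
        · exact abs_of_neg (not_le.1 (Finset.mem_filter.1 hi).2)
    _ = m (⋃ i ∈ F.filter fun i => 0 ≤ m (Δ i), Δ i)
          - m (⋃ i ∈ F.filter fun i => ¬0 ≤ m (Δ i), Δ i) := by
        rw [hunion, hunion]
    _ ≤ M + M := by
        linarith [(abs_le.1 (hM _ (hmeas fun i => 0 ≤ m (Δ i)))).2,
          (abs_le.1 (hM _ (hmeas fun i => ¬0 ≤ m (Δ i)))).1]

theorem cauchySeq_apply_sdiff_biUnion_range (hm : IsFinitelyAdditive m) {M : ℝ}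
    (hM : ∀ s, MeasurableSet s → |m s| ≤ M) {Δ : ℕ → Set α} (hΔ : ∀ i, MeasurableSet (Δ i))
    (hd : Pairwise (Disjoint on Δ)) :
    CauchySeq fun n => m ((⋃ i, Δ i) \ ⋃ i ∈ Finset.range n, Δ i) := by
  simp_rw [hm.apply_sdiff_biUnion_range hΔ hd]
  exact (tendsto_const_nhds.sub (hm.summable hM hΔ hd).hasSum.tendsto_sum_nat).cauchySeq

end IsFinitelyAdditive

theorem isFinitelyAdditive_iff_sum_fin [AddCommGroup E] {m : Set α → E} :
    IsFinitelyAdditive m ↔ ∀ (N : ℕ) (Δ : Fin N → Set α), (∀ i, MeasurableSet (Δ i)) →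
      Pairwise (Disjoint on Δ) → m (⋃ i, Δ i) = ∑ i, m (Δ i) := by
  refine ⟨fun hm N Δ hΔ hd => by simpa using hm.apply_biUnion_finset Finset.univ hΔ hd,
    fun h s t hs ht hst => ?_⟩
  have hd : Pairwise (Disjoint on ![s, t]) := by
    intro i j hij
    fin_cases i <;> fin_cases j <;> simp_all [onFun, hst.symm]
  have hU : ⋃ i, ![s, t] i = s ∪ t := by ext; simp [Fin.exists_fin_two]
  simpa [hU] using h 2 ![s, t] (by simp [Fin.forall_fin_two, hs, ht]) hd

namespace IsCountablyAdditive

variable [AddCommGroup E] [TopologicalSpace E] [IsTopologicalAddGroup E] [T2Space E]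
  {m : Set α → E}

theorem apply_empty (hm : IsCountablyAdditive m) : m ∅ = 0 := by
  have h := @hm (fun _ => ∅) (fun _ => .empty) fun _ _ _ => Set.disjoint_empty ∅
  rw [Set.iUnion_empty] at h
  exact tendsto_const_nhds_iff.1 h.summable.tendsto_atTop_zero

open Classical in
noncomputable def toVectorMeasure (hm : IsCountablyAdditive m) : VectorMeasure α E where
  measureOf' s := if MeasurableSet s then m s else 0
  empty' := by simp [hm.apply_empty]
  not_measurable' _ hs := if_neg hs
  m_iUnion' Δ hΔ hd := by simpa [hΔ, MeasurableSet.iUnion hΔ] using hm hΔ hd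

theorem toVectorMeasure_apply (hm : IsCountablyAdditive m) {s : Set α} (hs : MeasurableSet s) :
    hm.toVectorMeasure s = m s :=
  if_pos hs

theorem isFinitelyAdditive (hm : IsCountablyAdditive m) : IsFinitelyAdditive m :=
  fun s t hs ht hst => by
    simpa [hm.toVectorMeasure_apply, hs, ht, hs.union ht] using
      hm.toVectorMeasure.of_union hst hs ht

theorem tendsto_apply_sdiff_biUnion_range (hm : IsCountablyAdditive m) {Δ : ℕ → Set α}
    (hΔ : ∀ i, MeasurableSet (Δ i)) (hd : Pairwise (Disjoint on Δ)) :
    Tendsto (fun n => m ((⋃ i, Δ i) \ ⋃ i ∈ Finset.range n, Δ i)) atTop (𝓝 0) := by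
  simp_rw [hm.isFinitelyAdditive.apply_sdiff_biUnion_range hΔ hd]
  simpa only [sub_self] using
    (tendsto_const_nhds (x := m (⋃ i, Δ i))).sub (hm hΔ hd).tendsto_sum_nat

theorem exists_abs_lt {m : Set α → ℝ} (hm : IsCountablyAdditive m) :
    ∃ M > (0 : ℝ), ∀ s, MeasurableSet s → |m s| < M := by
  let ν : SignedMeasure α := hm.toVectorMeasure
  refine ⟨ν.totalVariation.real Set.univ + 1, by positivity, fun s hs => ?_⟩
  calc |m s| = ‖ν s‖ := by rw [hm.toVectorMeasure_apply hs, Real.norm_eq_abs]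
    _ ≤ ν.totalVariation.real Set.univ :=
      (ν.norm_le_totalVariation s).trans (measureReal_mono (Set.subset_univ s))
    _ < ν.totalVariation.real Set.univ + 1 := lt_add_one _

end IsCountablyAdditive

section Closable

variable [AddCommGroup E] {Q : E → ℝ} {u : Set α → E} {T : ℕ → Set α}

theorem apply_sub_apply_of_antitone (hu : IsFinitelyAdditive u)
    (hQu : IsFinitelyAdditive fun s => Q (u s)) (hT : Antitone T)
    (hTm : ∀ n, MeasurableSet (T n)) {k n : ℕ} (hkn : k ≤ n) :
    Q (u (T k) - u (T n)) = Q (u (T k)) - Q (u (T n)) := by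
  rw [← hu.apply_sdiff (hTm k) (hTm n) (hT hkn)]
  exact hQu.apply_sdiff (hTm k) (hTm n) (hT hkn)

theorem tendsto_apply_sub_apply_of_antitone [TopologicalSpace E] (hu : IsFinitelyAdditive u)
    (hQu : IsFinitelyAdditive fun s => Q (u s)) (hQnu : IsFinitelyAdditive fun s => Q (-u s))
    (hT : Antitone T) (hTm : ∀ n, MeasurableSet (T n))
    (ha : CauchySeq fun n => Q (u (T n))) (hb : CauchySeq fun n => Q (-u (T n))) :
    Tendsto (fun p : ℕ × ℕ => Q (u (T p.1) - u (T p.2))) atTop (𝓝 0) := by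
  have hdist : ∀ k n, ‖Q (u (T k) - u (T n))‖ ≤
      dist (Q (u (T k))) (Q (u (T n))) + dist (Q (-u (T k))) (Q (-u (T n))) := by
    intro k n
    rcases le_total k n with hkn | hnk
    · rw [apply_sub_apply_of_antitone hu hQu hT hTm hkn, Real.norm_eq_abs, ← Real.dist_eq]
      exact le_add_of_nonneg_right dist_nonneg
    · rw [← neg_sub_neg, apply_sub_apply_of_antitone hu.neg hQnu hT hTm hnk, Real.norm_eq_abs,
        ← Real.dist_eq, dist_comm]
      exact le_add_of_nonneg_left dist_nonneg
  refine squeeze_zero_norm (fun p => hdist p.1 p.2) ?_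
  simpa only [add_zero] using (cauchySeq_iff_tendsto_dist_atTop_0.1 ha).add
    (cauchySeq_iff_tendsto_dist_atTop_0.1 hb)

theorem IsClosableOn.hasSum_of_isCountablyAdditive [TopologicalSpace E]
    [IsTopologicalAddGroup E] [T2Space E] {D : Set E} (hQ : IsClosableOn Q D)
    (hu : IsCountablyAdditive u) (huD : ∀ s, MeasurableSet s → u s ∈ D)
    (hQu : IsFinitelyAdditive fun s => Q (u s)) (hQnu : IsFinitelyAdditive fun s => Q (-u s))
    {M M' : ℝ} (hM : ∀ s, MeasurableSet s → |Q (u s)| ≤ M)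
    (hM' : ∀ s, MeasurableSet s → |Q (-u s)| ≤ M')
    {Δ : ℕ → Set α} (hΔ : ∀ i, MeasurableSet (Δ i)) (hd : Pairwise (Disjoint on Δ)) :
    HasSum (fun i => Q (u (Δ i))) (Q (u (⋃ i, Δ i))) := by
  have hT : Antitone fun n => (⋃ i, Δ i) \ ⋃ i ∈ Finset.range n, Δ i := fun k n hkn =>
    Set.sdiff_subset_sdiff_right
      (Set.biUnion_subset_biUnion_left (Finset.coe_subset.2 (Finset.range_mono hkn)))
  have hTm (n : ℕ) : MeasurableSet ((⋃ i, Δ i) \ ⋃ i ∈ Finset.range n, Δ i) :=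
    (MeasurableSet.iUnion hΔ).diff ((Finset.range n).measurableSet_biUnion fun i _ => hΔ i)
  have htail := hQ _ (fun n => huD _ (hTm n)) (hu.tendsto_apply_sdiff_biUnion_range hΔ hd)
    (tendsto_apply_sub_apply_of_antitone hu.isFinitelyAdditive hQu hQnu hT hTm
      (hQu.cauchySeq_apply_sdiff_biUnion_range hM hΔ hd)
      (hQnu.cauchySeq_apply_sdiff_biUnion_range hM' hΔ hd))
  refine (hQu.summable hM hΔ hd).hasSum_iff_tendsto_nat.2 ?_
  simpa only [hQu.apply_sdiff_biUnion_range hΔ hd, sub_sub_cancel, sub_zero] using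
    (tendsto_const_nhds (x := Q (u (⋃ i, Δ i)))).sub htail

end Closable

end SetFunction

theorem stmt11_general {A H : Type*} [MeasurableSpace A]
    [NormedAddCommGroup H] [InnerProductSpace ℂ H]
    (P : Set A → H →L[ℂ] H)
    (hPsigma : ∀ (Δi : ℕ → Set A), (∀ i, MeasurableSet (Δi i)) →
      Pairwise (Function.onFun Disjoint Δi) →
      ∀ x : H, HasSum (fun i => P (Δi i) x) (P (⋃ i, Δi i) x))
    (D : Submodule ℂ H)
    (Q : H → ℝ)
    -- closability
    (hclos : ∀ Φ : ℕ → H, (∀ n, Φ n ∈ D) → Tendsto (fun n => Φ n) atTop (nhds 0) →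
      Tendsto (fun p : ℕ × ℕ => Q (Φ p.1 - Φ p.2)) atTop (nhds 0) →
      Tendsto (fun n => Q (Φ n)) atTop (nhds 0))
    -- stability of the domain (common to both notions)
    (hstab : ∀ Δ, MeasurableSet Δ → ∀ Φ ∈ D, P Δ Φ ∈ D) :
    -- orthogonal additivity ↔ countable orthogonal additivity
    ((∀ Φ ∈ D, ∃ M > (0 : ℝ), ∀ Δ, MeasurableSet Δ → |Q (P Δ Φ)| < M) ∧
      (∀ (N : ℕ) (Δi : Fin N → Set A) (Δ : Set A), MeasurableSet Δ →
        (∀ i, MeasurableSet (Δi i)) → Pairwise (Function.onFun Disjoint Δi) →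
        (⋃ i, Δi i) = Δ → ∀ Φ ∈ D, Q (P Δ Φ) = ∑ i, Q (P (Δi i) Φ)))
    ↔
    (∀ (Δi : ℕ → Set A) (Δ : Set A), MeasurableSet Δ →
      (∀ i, MeasurableSet (Δi i)) → Pairwise (Function.onFun Disjoint Δi) →
      (⋃ i, Δi i) = Δ → ∀ Φ ∈ D,
        HasSum (fun i => Q (P (Δi i) Φ)) (Q (P Δ Φ))) := by
  constructor
  · rintro ⟨hbdd, hfin⟩ Δi Δ - hΔi hd rfl Φ hΦ
    have hQP (Ψ : H) (hΨ : Ψ ∈ D) : IsFinitelyAdditive fun s => Q (P s Ψ) :=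
      isFinitelyAdditive_iff_sum_fin.2 fun N Δ hΔ hd => hfin N Δ _ (.iUnion hΔ) hΔ hd rfl Ψ hΨ
    obtain ⟨M, -, hM⟩ := hbdd Φ hΦ
    obtain ⟨M', -, hM'⟩ := hbdd (-Φ) (neg_mem hΦ)
    have hQPneg := hQP (-Φ) (neg_mem hΦ)
    simp only [map_neg] at hM' hQPneg
    exact IsClosableOn.hasSum_of_isCountablyAdditive hclos (fun Δ hΔ hd => hPsigma Δ hΔ hd Φ)
      (fun s hs => hstab s hs Φ hΦ) (hQP Φ hΦ) hQPneg (fun s hs => (hM s hs).le)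
      (fun s hs => (hM' s hs).le) hΔi hd
  · intro hcnt
    have hQP (Φ : H) (hΦ : Φ ∈ D) : IsCountablyAdditive fun s => Q (P s Φ) :=
      fun Δ hΔ hd => hcnt Δ _ (.iUnion hΔ) hΔ hd rfl Φ hΦ
    refine ⟨fun Φ hΦ => (hQP Φ hΦ).exists_abs_lt, ?_⟩
    rintro N Δi Δ - hΔi hd rfl Φ hΦ
    exact isFinitelyAdditive_iff_sum_fin.1 (hQP Φ hΦ).isFinitelyAdditive N Δi hΔi hd

/-- A closable Hermitean quadratic form on a dense projection-stable domain of a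
direct integral Hilbert space is orthogonally additive (Σ-bounded + finitely additive over
finite measurable partitions) if and only if it is countably orthogonally additive. -/
theorem stmt11 {A H : Type*} [MeasurableSpace A]
    [NormedAddCommGroup H] [InnerProductSpace ℂ H] [CompleteSpace H]
    (P : Set A → H →L[ℂ] H)
    (hPsa : ∀ Δ, MeasurableSet Δ → IsSelfAdjoint (P Δ))
    (hPmul : ∀ Δ₁ Δ₂, MeasurableSet Δ₁ → MeasurableSet Δ₂ →
      (P Δ₁).comp (P Δ₂) = P (Δ₁ ∩ Δ₂))
    (hPuniv : P Set.univ = 1)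
    (hPsigma : ∀ (Δi : ℕ → Set A), (∀ i, MeasurableSet (Δi i)) →
      Pairwise (Function.onFun Disjoint Δi) →
      ∀ x : H, HasSum (fun i => P (Δi i) x) (P (⋃ i, Δi i) x))
    (D : Submodule ℂ H) (hdense : Dense (D : Set H))
    (Q : H → ℝ)
    -- closability
    (hclos : ∀ Φ : ℕ → H, (∀ n, Φ n ∈ D) → Tendsto (fun n => Φ n) atTop (nhds 0) →
      Tendsto (fun p : ℕ × ℕ => Q (Φ p.1 - Φ p.2)) atTop (nhds 0) →
      Tendsto (fun n => Q (Φ n)) atTop (nhds 0))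
    -- stability of the domain (common to both notions)
    (hstab : ∀ Δ, MeasurableSet Δ → ∀ Φ ∈ D, P Δ Φ ∈ D) :
    -- orthogonal additivity ↔ countable orthogonal additivity
    ((∀ Φ ∈ D, ∃ M > (0 : ℝ), ∀ Δ, MeasurableSet Δ → |Q (P Δ Φ)| < M) ∧
      (∀ (N : ℕ) (Δi : Fin N → Set A) (Δ : Set A), MeasurableSet Δ →
        (∀ i, MeasurableSet (Δi i)) → Pairwise (Function.onFun Disjoint Δi) →
        (⋃ i, Δi i) = Δ → ∀ Φ ∈ D, Q (P Δ Φ) = ∑ i, Q (P (Δi i) Φ)))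
    ↔
    (∀ (Δi : ℕ → Set A) (Δ : Set A), MeasurableSet Δ →
      (∀ i, MeasurableSet (Δi i)) → Pairwise (Function.onFun Disjoint Δi) →
      (⋃ i, Δi i) = Δ → ∀ Φ ∈ D,
        HasSum (fun i => Q (P (Δi i) Φ)) (Q (P Δ Φ))) :=
  stmt11_general P hPsigma D Q hclos hstab
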